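/- arXiv:1107.2091 — 2 statements merged into one kernel-verified Lean document; each statement's English description precedes it below -/
import Mathlib

section
/- Let A = (Q, Σ, {M_a}, α) be a finite probabilistic table and w ∈ Σ^ω an infinite word. For every event Γ in the tail σ-field F_∞ there exists a sequence (L_n)_{n∈ℕ} of subsets of Q such that the P^w-measure of the symmetric difference between the event {r ∈ Ω : r(n) ∈ L_n} and Γ tends to 0 as n → ∞. -/
open Filter Topology MeasureTheory

namespace PAut

/-- A finite probabilistic table: row-stochastic matrices indexed by letters,
together with an initial distribution. -/
structure FPT (Q : Type*) (A : Type*) [Fintype Q] where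
  M : A → Q → Q → ℝ
  M_nonneg : ∀ a q q', 0 ≤ M a q q'
  M_row : ∀ a q, ∑ q', M a q q' = 1
  init : Q → ℝ
  init_nonneg : ∀ q, 0 ≤ init q
  init_sum : ∑ q, init q = 1

variable {Q A : Type*} [Fintype Q] [DecidableEq Q]

/-- `β` is a probability distribution on `Q`. -/
def IsDist (β : Q → ℝ) : Prop := (∀ q, 0 ≤ β q) ∧ ∑ q, β q = 1

/-- The matrix `M_ρ` of a finite word `ρ`. -/
def Mword (T : FPT Q A) : List A → Q → Q → ℝ
  | [], q, q' => if q = q' then 1 else 0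
  | a :: ρ, q, q' => ∑ x, T.M a q x * Mword T ρ x q'

/-- `δ(β,ρ)`: the distribution after reading `ρ` from initial distribution `β`. -/
def delta (T : FPT Q A) (β : Q → ℝ) (ρ : List A) : Q → ℝ :=
  fun q => ∑ q', β q' * Mword T ρ q' q

/-- Support of a distribution. -/
def supp (β : Q → ℝ) : Set Q := {q | β q ≠ 0}

/-- `H·ρ` : states reachable with positive probability from `H` reading `ρ`. -/
def act (T : FPT Q A) (H : Set Q) (ρ : List A) : Set Q :=
  {q | ∃ q' ∈ H, 0 < Mword T ρ q' q}

/-- One step of the homogeneous chain induced on `S` by the word `ρ`. -/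
def stepRel (T : FPT Q A) (S : Set Q) (ρ : List A) (x y : Q) : Prop :=
  x ∈ S ∧ y ∈ S ∧ 0 < Mword T ρ x y

/-- `S·ρ^#` : the recurrent states of the homogeneous chain induced on `S` by `ρ`. -/
def hashSet (T : FPT Q A) (S : Set Q) (ρ : List A) : Set Q :=
  {s | s ∈ S ∧ ∀ t, Relation.ReflTransGen (stepRel T S ρ) s t →
        Relation.ReflTransGen (stepRel T S ρ) t s}

/-- `(S,ρ)` is a `#`-reduction. -/
def IsHashReduction (T : FPT Q A) (S : Set Q) (ρ : List A) : Prop :=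
  act T S ρ = S ∧ hashSet T S ρ ≠ S

/-- The execution tree `(β,ρ)` (finite word) is chain recurrent. -/
def ChainRecFin (T : FPT Q A) (β : Q → ℝ) (ρ : List A) : Prop :=
  ∀ ρ₁ ρ₂ : List A, (ρ₁ ++ ρ₂) <+: ρ →
    ¬ IsHashReduction T (supp (delta T β ρ₁)) ρ₂

/-- `l` is a prefix of the infinite word `w`. -/
def PrefixOf (l : List A) (w : ℕ → A) : Prop :=
  ∀ (i : ℕ) (h : i < l.length), l.get ⟨i, h⟩ = w i

/-- The execution tree `(β,w)` (infinite word) is chain recurrent. -/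
def ChainRecInf (T : FPT Q A) (β : Q → ℝ) (w : ℕ → A) : Prop :=
  ∀ ρ₁ ρ₂ : List A, PrefixOf (ρ₁ ++ ρ₂) w →
    ¬ IsHashReduction T (supp (delta T β ρ₁)) ρ₂

/-- `w[1..n]` : the prefix of length `n` of the infinite word `w`. -/
def wordPrefix (w : ℕ → A) (n : ℕ) : List A := (List.range n).map w

/-- `w[n₁+1..n₂]` : the letters of `w` read between time `n₁` and time `n₂`. -/
def wordSegment (w : ℕ → A) (n₁ n₂ : ℕ) : List A :=
  (List.range (n₂ - n₁)).map fun j => w (n₁ + j)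

/-- `μ_n^w = δ(α, w[1..n])` : the induced process on `Q`. -/
def muDist (T : FPT Q A) (w : ℕ → A) (n : ℕ) : Q → ℝ :=
  delta T T.init (wordPrefix w n)

/-- A process `μ` on `Q` is simple: a partition `(Aₙ, Aₙᶜ)` of `Q`,
with mass `> λ` on each point of `Aₙ` and total mass of `Aₙᶜ` going to `0`. -/
def SimpleProcess (μ : ℕ → Q → ℝ) : Prop :=
  ∃ lam : ℝ, 0 < lam ∧ ∃ Aset : ℕ → Finset Q,
    (∀ n, ∀ q ∈ Aset n, lam < μ n q) ∧
    Tendsto (fun n => ∑ q ∈ (Aset n)ᶜ, μ n q) atTop (𝓝 0)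

open Classical in
/-- `β(F)` : the mass a distribution gives to a set of states. -/
noncomputable def massOn (β : Q → ℝ) (F : Set Q) : ℝ :=
  ∑ q : Q, if q ∈ F then β q else 0

open Classical in
/-- The uniform distribution on a set of states. -/
noncomputable def unif (D : Set Q) : Q → ℝ :=
  fun q => if q ∈ D then 1 / (Nat.card D : ℝ) else 0

/-- The Dirac distribution at a state. -/
def dirac (q : Q) : Q → ℝ := fun q' => if q' = q then 1 else 0

/-- `ε(A)` : the smallest nonzero transition probability of the automaton. -/
noncomputable def minProb (T : FPT Q A) : ℝ :=
  sInf {x : ℝ | 0 < x ∧ ∃ a q q', T.M a q q' = x}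

/-! ### Linked graphs -/

/-- Left endpoints of a bipartite graph. -/
def lgA (G : Set (Q × Q)) : Set Q := Prod.fst '' G

/-- Right endpoints of a bipartite graph. -/
def lgB (G : Set (Q × Q)) : Set Q := Prod.snd '' G

/-- The linking condition for a sequence of bipartite graphs. -/
def IsLinked (l : List (Set (Q × Q))) : Prop :=
  List.Chain' (fun G H => lgB G = lgA H) l

/-- Origin of a linked graph. -/
def lgOrg : List (Set (Q × Q)) → Set Q
  | [] => ∅
  | G :: _ => lgA G

/-- Destination of a linked graph. -/
def lgDest : List (Set (Q × Q)) → Set Q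
  | [] => ∅
  | [G] => lgB G
  | _ :: G :: l => lgDest (G :: l)

/-- Destination, with a default value for the empty linked graph. -/
def lgDestD (S : Set Q) : List (Set (Q × Q)) → Set Q
  | [] => S
  | l => lgDest l

/-- Compaction of a linked graph, as a relation on `Q`. -/
def compRel : List (Set (Q × Q)) → Set (Q × Q)
  | [] => {p | p.1 = p.2}
  | [G] => G
  | G :: H :: l => {p | ∃ t, (p.1, t) ∈ G ∧ (t, p.2) ∈ compRel (H :: l)}

/-- Reachability in a graph given as a set of edges. -/
def grReach (C : Set (Q × Q)) (s t : Q) : Prop :=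
  Relation.ReflTransGen (fun a b => (a, b) ∈ C) s t

/-- `Rec(I)` : the recurrent states of the compaction of a linked graph. -/
def recSet (l : List (Set (Q × Q))) : Set Q :=
  {s | s ∈ lgOrg l ∧ ∀ t, grReach (compRel l) s t → grReach (compRel l) t s}

/-- `Rec(s,I)` : the recurrent states reachable from `s` in the compaction. -/
def recFrom (s : Q) (l : List (Set (Q × Q))) : Set Q :=
  {t | t ∈ recSet l ∧ grReach (compRel l) s t}

/-- Restrict each graph of a linked graph to the sources reachable from `S`. -/
def restrictFrom (S : Set Q) : List (Set (Q × Q)) → List (Set (Q × Q))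
  | [] => []
  | G :: l => ({p | p ∈ G ∧ p.1 ∈ S} : Set (Q × Q)) ::
      restrictFrom (lgB ({p | p ∈ G ∧ p.1 ∈ S} : Set (Q × Q))) l

/-- `(i₁,i₂)` (0-indexed) is a border of the linked graph `l`. -/
def IsBorder (l : List (Set (Q × Q))) (i₁ i₂ : ℕ) : Prop :=
  i₁ < i₂ ∧ i₂ < l.length ∧ lgB (l.getD i₂ ∅) ⊆ lgA (l.getD i₁ ∅)

/-- The action of a border `(i₁,i₂)` (0-indexed) on a linked graph. -/
def borderAct (l : List (Set (Q × Q))) (i₁ i₂ : ℕ) : List (Set (Q × Q)) :=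
  let p := i₁ - 1
  let seg := (l.drop i₁).take (i₂ + 1 - i₁)
  let pre := l.take p
  let S := lgDestD (lgOrg l) pre
  let Gspec : Set (Q × Q) := {pr | pr.1 ∈ S ∧ pr.2 ∈ recFrom pr.1 seg}
  pre ++ Gspec :: restrictFrom (lgB Gspec) (l.drop (p + 1))

/-- Action of a chain of borders on a linked graph. -/
def borderChainAct : List (ℕ × ℕ) → List (Set (Q × Q)) → List (Set (Q × Q))
  | [], l => l
  | b :: bs, l => borderChainAct bs (borderAct l b.1 b.2)

/-- `B` is a chain of borders on the linked graph `l`. -/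
def IsBorderChain : List (ℕ × ℕ) → List (Set (Q × Q)) → Prop
  | [], _ => True
  | b :: bs, l => IsBorder l b.1 b.2 ∧ IsBorderChain bs (borderAct l b.1 b.2)

/-- `LG(ρ, S, T)` : the linked graph induced by reading `ρ` from `S`. -/
def lgOf (T : FPT Q A) (S : Set Q) : List A → List (Set (Q × Q))
  | [] => []
  | a :: ρ => ({p | p.1 ∈ S ∧ 0 < T.M a p.1 p.2} : Set (Q × Q)) ::
      lgOf T (lgB ({p | p.1 ∈ S ∧ 0 < T.M a p.1 p.2} : Set (Q × Q))) ρ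

/-- `C →^{#-ρ} D`. -/
def HashRho (T : FPT Q A) (ρ : List A) (C D : Set Q) : Prop :=
  ∃ B : List (ℕ × ℕ), IsBorderChain B (lgOf T C ρ) ∧
    lgDestD C (borderChainAct B (lgOf T C ρ)) = D

/-- `C →^{#} D`. -/
def Hash (T : FPT Q A) (C D : Set Q) : Prop := ∃ ρ : List A, HashRho T ρ C D

/-- Structurally simple probabilistic automaton. -/
def StructSimple (T : FPT Q A) : Prop :=
  ∀ (ρ : List A) (C D : Set Q),
    D ⊆ C → HashRho T ρ C D →
    (∀ D' : Set Q, HashRho T ρ C D' → D' ⊆ D → D' = D) →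
    ChainRecFin T (unif D) ρ

/-- `C →^{#-ρ-I} D`. -/
def HashIRho (T : FPT Q A) (ρ : List A) (C : Set Q) (I : Set (Q × Q)) (D : Set Q) : Prop :=
  ∃ B : List (ℕ × ℕ), IsBorderChain B (lgOf T C ρ) ∧
    ∃ i : ℕ, 1 ≤ i ∧ i ≤ ρ.length ∧
      compRel ((borderChainAct B (lgOf T C ρ)).take i) = I ∧
      lgDest ((borderChainAct B (lgOf T C ρ)).take i) = D

/-- Edge of the extended support graph. -/
def ESGEdge (T : FPT Q A) (C D : Set Q) : Prop :=
  ∃ (I : Set (Q × Q)) (ρ : List A), HashIRho T ρ C I D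

/-- Reachability in the extended support graph. -/
def ESGReach (T : FPT Q A) : Set Q → Set Q → Prop :=
  Relation.ReflTransGen (ESGEdge T)

/-- A subsequence of recurrent execution trees of the execution tree `(β, w)`. -/
structure RecSeqOf (T : FPT Q A) (β : Q → ℝ) (w : ℕ → A) where
  k : ℕ
  βs : Fin (k + 1) → Q → ℝ
  ρs : Fin k → List A
  ρ's : Fin k → List A
  wlast : ℕ → A
  dists : ∀ i, IsDist (βs i)
  first_eq : βs 0 = β
  supp_sub : ∀ i : Fin k,
    supp (βs i.succ) ⊆ supp (delta T (βs i.castSucc) (ρs i ++ ρ's i))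
  chainrec : ∀ i : Fin k, ChainRecFin T (βs i.castSucc) (ρs i)
  chainrec_last : ChainRecInf T (βs (Fin.last k)) wlast
  decomp_prefix : PrefixOf ((List.ofFn fun i : Fin k => ρs i ++ ρ's i).flatten) w
  decomp_tail : ∀ n : ℕ,
    w (((List.ofFn fun i : Fin k => ρs i ++ ρ's i).flatten).length + n) = wlast n

/-- The length of a sequence of recurrent execution trees. -/
def RecSeqOf.len {T : FPT Q A} {β : Q → ℝ} {w : ℕ → A} (r : RecSeqOf T β w) : ℕ :=
  ∑ i, (r.ρ's i).length

/-- `w` is a lasso shape word `ρ₁ · ρ₂^ω` with `ρ₂` nonempty. -/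
def IsLasso (w : ℕ → A) : Prop :=
  ∃ ρ₁ ρ₂ : List A, ρ₂ ≠ [] ∧
    (∀ n : ℕ, n < ρ₁.length → ρ₁[n]? = some (w n)) ∧
    (∀ n : ℕ, ρ₁.length ≤ n → ρ₂[(n - ρ₁.length) % ρ₂.length]? = some (w n))

/-- The periodic word `ρ^ω`. -/
def periodicWord (ρ : List A) (h : ρ ≠ []) : ℕ → A :=
  fun n => ρ.get ⟨n % ρ.length, Nat.mod_lt n (List.length_pos_iff.mpr h)⟩

/-- States visited infinitely often by a run. -/
def infOcc (r : ℕ → Q) : Set Q := {q | ∀ N : ℕ, ∃ n, N ≤ n ∧ r n = q}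

/-- The parity acceptance condition for a priority function `p`. -/
def parityEvent (p : Q → ℕ) : Set (ℕ → Q) := {r | Even (sInf (p '' infOcc r))}

/-! ### The induced measure on runs -/

/-- Probability of a cylinder of length `n+1` for the chain started in `β` reading `w`. -/
def cylProb (T : FPT Q A) (β : Q → ℝ) (w : ℕ → A) (n : ℕ) (f : Fin (n + 1) → Q) : ℝ :=
  β (f 0) * ∏ i : Fin n, T.M (w i) (f i.castSucc) (f i.succ)

/-- `μ` is the probability measure `P^w` induced on runs by the chain started
in `β` reading `w`. -/
def IsMarkovMeasure [MeasurableSpace Q] (T : FPT Q A) (β : Q → ℝ) (w : ℕ → A)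
    (μ : Measure (ℕ → Q)) : Prop :=
  IsProbabilityMeasure μ ∧
    ∀ (n : ℕ) (f : Fin (n + 1) → Q),
      μ {r | ∀ i : Fin (n + 1), r i = f i} = ENNReal.ofReal (cylProb T β w n f)

/-- `F_n` : the σ-field generated by the coordinates `X_m`, `m ≥ n`. -/
def futureField (Q : Type*) [m : MeasurableSpace Q] (n : ℕ) : MeasurableSpace (ℕ → Q) :=
  ⨆ k, ⨆ _ : n ≤ k, MeasurableSpace.comap (fun r : ℕ → Q => r k) m

/-- `F_∞` : the tail σ-field. -/
def tailField (Q : Type*) [MeasurableSpace Q] : MeasurableSpace (ℕ → Q) :=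
  ⨅ n : ℕ, futureField Q n

/-- `Γ` is an atomic event of the σ-field `m` for the measure `μ`. -/
def IsAtomIn {Q : Type*} [MeasurableSpace Q] (μ : Measure (ℕ → Q))
    (m : MeasurableSpace (ℕ → Q)) (Γ : Set (ℕ → Q)) : Prop :=
  0 < μ Γ ∧ ∀ Γ' : Set (ℕ → Q), MeasurableSet[m] Γ' → Γ' ⊆ Γ → μ Γ' = 0 ∨ μ Γ' = μ Γ

/-- `τ^i_∞` : runs that eventually stay in the jet `J^i`. -/
def tauInf {Q : Type*} {c : ℕ} (J : Fin (c + 1) → ℕ → Set Q) (i : Fin (c + 1)) :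
    Set (ℕ → Q) :=
  {r | ∃ N : ℕ, ∀ n, N ≤ n → r n ∈ J i n}

/-- `(J^0,...,J^c)` is a partition of `Q^ω` into jets. -/
def JetPartition {Q : Type*} {c : ℕ} (J : Fin (c + 1) → ℕ → Set Q) : Prop :=
  ∀ (n : ℕ) (q : Q), ∃! i : Fin (c + 1), q ∈ J i n

/-- Absorption: almost every run eventually enters one of the jets `J^i`, `i ≥ 1`,
and stays there forever. -/
def Absorbing {Q : Type*} [MeasurableSpace Q] {c : ℕ} (μ : Measure (ℕ → Q))
    (J : Fin (c + 1) → ℕ → Set Q) : Prop :=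
  μ {r | ∃ i : Fin (c + 1), i ≠ 0 ∧ ∃ N : ℕ, ∀ n, N ≤ n → r n ∈ J i n} = 1

/-- Conditional probability `μ(E | F)`. -/
noncomputable def condProb {Q : Type*} [MeasurableSpace Q] (μ : Measure (ℕ → Q))
    (E F : Set (ℕ → Q)) : ℝ :=
  (μ (E ∩ F)).toReal / (μ F).toReal

/-- The jet `J` is mixing for the measure `μ`. -/
def MixingJet {Q : Type*} [MeasurableSpace Q] (μ : Measure (ℕ → Q)) (J : ℕ → Set Q) :
    Prop :=
  ∀ q q' : Q, ∀ qs : ℕ → Q, (∀ n, qs n ∈ J n) → ∀ m : ℕ,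
    (∃ L : ℝ, 0 < L ∧
      Tendsto (fun n => condProb μ {r | r n = qs n} {r | r m = q}) atTop (𝓝 L)) →
    (∃ L : ℝ, 0 < L ∧
      Tendsto (fun n => condProb μ {r | r n = qs n} {r | r m = q'}) atTop (𝓝 L)) →
    Tendsto (fun n =>
        condProb μ {r | r n = qs n} ({r | r n ∈ J n} ∩ {r | r m = q}) /
        condProb μ {r | r n = qs n} ({r | r n ∈ J n} ∩ {r | r m = q'}))
      atTop (𝓝 1)

end PAut

/-!
Every tail event `Γ` is measurable for the product σ-field, so for each `ε > 0` it is
`ε`-close in measure to an event `B` depending only on the coordinates up to some time `N`.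
For `n ≥ N`, `B` is an event of the past of time `n` and `Γ` one of its future, and the
Markov property makes them independent conditionally on the state at time `n`. Under that
conditional independence no past event predicts `Γ` better than the Bayes rule "`Γ` occurs iff
the state at time `n` lies in the set `L n` of states from which `Γ` is more likely than not",
so `μ ({r | r n ∈ L n} ∆ Γ) ≤ μ (B ∆ Γ) < ε` for all `n ≥ N`.
-/

open ProbabilityTheory

namespace PAut

theorem measurableSet_generateFrom_preimage {Ω α : Type*} [Countable α] {f : Ω → α}
    {C : Set (Set Ω)} (hC : ∀ ω, f ⁻¹' {f ω} ∈ C) (S : Set α) :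
    MeasurableSet[MeasurableSpace.generateFrom C] (f ⁻¹' S) := by
  let := MeasurableSpace.generateFrom C
  rw [← Set.biUnion_preimage_singleton]
  refine MeasurableSet.biUnion S.to_countable fun y _ => ?_
  rcases em (y ∈ Set.range f) with ⟨ω, rfl⟩ | hy
  · exact MeasurableSpace.measurableSet_generateFrom (hC ω)
  · rw [Set.preimage_singleton_eq_empty.2 hy]
    exact MeasurableSet.empty

section BayesRule

variable {Ω α : Type*} [MeasurableSpace Ω]

theorem measure_eq_sum_measure_fiber_inter [Fintype α] [MeasurableSpace α]
    [MeasurableSingletonClass α] {X : Ω → α} (hX : Measurable X) (μ : Measure Ω)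
    (S : Set Ω) :
    μ S = ∑ x, μ (X ⁻¹' {x} ∩ S) := by
  have h := sum_measure_preimage_singleton (μ := μ.restrict S) Finset.univ
    fun x _ => hX (measurableSet_singleton x)
  rw [Finset.coe_univ, Set.preimage_univ, Measure.restrict_apply_univ] at h
  rw [← h]
  exact Finset.sum_congr rfl fun x _ => Measure.restrict_apply (hX (measurableSet_singleton x))

theorem cond_inter_eq_mul_of_measure_inter_mul {μ : Measure Ω} [IsFiniteMeasure μ]
    {E s t : Set Ω} (hE : MeasurableSet E)
    (h : μ (E ∩ (s ∩ t)) * μ E = μ (E ∩ s) * μ (E ∩ t)) :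
    μ[s ∩ t|E] = μ[s|E] * μ[t|E] := by
  rcases eq_or_ne (μ E) 0 with h0 | h0
  · simp [cond_eq_zero_of_meas_eq_zero h0]
  rw [cond_apply hE, cond_apply hE, cond_apply hE]
  calc (μ E)⁻¹ * μ (E ∩ (s ∩ t))
      = (μ E)⁻¹ * μ (E ∩ (s ∩ t)) * (μ E * (μ E)⁻¹) := by
        rw [ENNReal.mul_inv_cancel h0 (measure_ne_top μ E), mul_one]
    _ = (μ E)⁻¹ * (μ (E ∩ (s ∩ t)) * μ E) * (μ E)⁻¹ := by ring
    _ = (μ E)⁻¹ * μ (E ∩ s) * ((μ E)⁻¹ * μ (E ∩ t)) := by rw [h]; ring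

theorem min_measure_le_measure_symmDiff_of_indepSet {ν : Measure Ω}
    [IsZeroOrProbabilityMeasure ν] {B Γ : Set Ω} (hB : MeasurableSet B) (hΓ : MeasurableSet Γ)
    (hind : IndepSet B Γ ν) :
    min (ν Γ) (ν Γᶜ) ≤ ν (symmDiff B Γ) := by
  set y := ν (B ∩ Γ)
  set u := ν (B \ Γ)
  set v := ν (Γ \ B)
  set z := ν (Γᶜ \ B)
  have hνB : ν B = y + u := (measure_inter_add_sdiff B hΓ).symm
  have hνΓ : ν Γ = y + v := by rw [← measure_inter_add_sdiff Γ hB, Set.inter_comm]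
  have hνΓc : ν Γᶜ = u + z := by
    rw [← measure_inter_add_sdiff Γᶜ hB, Set.inter_comm, ← Set.sdiff_eq]
  -- independence says that the 2 × 2 table of the masses `y, u, v, z` has determinant zero
  have hdet : y * z = u * v := by
    rcases IsZeroOrProbabilityMeasure.measure_univ (μ := ν) with h0 | h1
    · simp [y, u, Measure.measure_univ_eq_zero.1 h0]
    have huniv : y + u + v + z = 1 := by
      rw [← h1, ← measure_add_measure_compl hΓ, hνΓ, hνΓc]
      ring
    have hfin : y * y + y * u + y * v ≠ ⊤ := by finiteness
    refine (ENNReal.add_right_inj hfin).1 ?_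
    calc y * y + y * u + y * v + y * z = y * (y + u + v + z) := by ring
      _ = (y + u) * (y + v) := by
        rw [huniv, mul_one, ← hνB, ← hνΓ]
        exact hind.measure_inter_eq_mul
      _ = y * y + y * u + y * v + u * v := by ring
  rw [hνΓ, hνΓc, measure_symmDiff_eq hB.nullMeasurableSet hΓ.nullMeasurableSet]
  rcases le_or_gt y u with hyu | hyu
  · exact (min_le_left _ _).trans (by gcongr)
  rcases le_or_gt z v with hzv | hzv
  · exact (min_le_right _ _).trans (by gcongr)
  exact absurd hdet (ENNReal.mul_lt_mul hyu hzv).ne'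

def majoritySet (μ : Measure Ω) (X : Ω → α) (Γ : Set Ω) : Set α :=
  {x | μ[Γᶜ|X ⁻¹' {x}] < μ[Γ|X ⁻¹' {x}]}

theorem measure_symmDiff_preimage_majoritySet_le [Fintype α] [MeasurableSpace α]
    [MeasurableSingletonClass α] {μ : Measure Ω} [IsFiniteMeasure μ] {X : Ω → α}
    (hX : Measurable X) {B Γ : Set Ω} (hB : MeasurableSet B) (hΓ : MeasurableSet Γ)
    (hind : ∀ x, IndepSet B Γ μ[|X ⁻¹' {x}]) :
    μ (symmDiff (X ⁻¹' majoritySet μ X Γ) Γ) ≤ μ (symmDiff B Γ) := by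
  rw [measure_eq_sum_measure_fiber_inter hX μ,
    measure_eq_sum_measure_fiber_inter hX μ (symmDiff B Γ)]
  refine Finset.sum_le_sum fun x _ => ?_
  have hE := hX (measurableSet_singleton x)
  rw [← cond_mul_eq_inter hE, ← cond_mul_eq_inter hE, ← cond_inter_self hE]
  gcongr ?_ * _
  refine le_trans (le_of_eq ?_) (min_measure_le_measure_symmDiff_of_indepSet hB hΓ (hind x))
  by_cases hx : x ∈ majoritySet μ X Γ
  · have hfiber : X ⁻¹' {x} ∩ symmDiff (X ⁻¹' majoritySet μ X Γ) Γ =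
        X ⁻¹' {x} ∩ Γᶜ := by
      ext ω
      simp +contextual [Set.mem_symmDiff, hx]
    rw [hfiber, cond_inter_self hE, min_eq_right hx.le]
  · have hfiber : X ⁻¹' {x} ∩ symmDiff (X ⁻¹' majoritySet μ X Γ) Γ =
        X ⁻¹' {x} ∩ Γ := by
      ext ω
      simp +contextual [Set.mem_symmDiff, hx]
    rw [hfiber, cond_inter_self hE, min_eq_left (not_lt.1 hx)]

end BayesRule

theorem exists_measurableSet_piLE_measure_symmDiff_lt {X : ℕ → Type*}
    [∀ i, MeasurableSpace (X i)] (μ : Measure (∀ i, X i)) [IsFiniteMeasure μ]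
    {s : Set (∀ i, X i)} (hs : MeasurableSet s) {ε : ENNReal} (hε : 0 < ε) :
    ∃ N t, MeasurableSet[Filtration.piLE N] t ∧ μ (symmDiff t s) < ε := by
  obtain ⟨t, ht, hts⟩ := exists_measure_symmDiff_lt_of_generateFrom_isSetRing (μ := μ)
    isSetRing_measurableCylinders
    ⟨{Set.univ}, Set.countable_singleton _, by simpa using univ_mem_measurableCylinders X,
      by simp⟩
    generateFrom_measurableCylinders.symm hs hε
  obtain ⟨I, S, hS, rfl⟩ := (mem_measurableCylinders t).1 ht
  have hI : I ⊆ Finset.Iic (I.sup id) := fun i hi => Finset.mem_Iic.2 (Finset.le_sup (f := id) hi)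
  refine ⟨I.sup id, _, ?_, hts⟩
  rw [Filtration.piLE_eq_comap_frestrictLe]
  exact ⟨_, Finset.measurable_restrict₂ hI hS, by
    rw [← Set.preimage_comp, Preorder.frestrictLe, Finset.restrict₂_comp_restrict]; rfl⟩

section PathCylinder

variable {Q : Type*}

def pathCylinder (s : Finset ℕ) (σ : ℕ → Q) : Set (ℕ → Q) :=
  {r | ∀ k ∈ s, r k = σ k}

theorem restrict_preimage_singleton (s : Finset ℕ) (σ : ℕ → Q) :
    Finset.restrict (π := fun _ => Q) s ⁻¹' {s.restrict σ} = pathCylinder s σ := by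
  ext r
  simp [pathCylinder, funext_iff]

theorem pathCylinder_inter_of_subset {s t : Finset ℕ} {σ τ : ℕ → Q} (hst : s ⊆ t)
    (h : (pathCylinder s σ ∩ pathCylinder t τ).Nonempty) :
    pathCylinder s σ ∩ pathCylinder t τ = pathCylinder t τ := by
  obtain ⟨r, hrσ, hrτ⟩ := h
  refine Set.inter_eq_right.2 fun r' hr' k hk => ?_
  rw [hr' k (hst hk), ← hrτ k (hst hk), hrσ k hk]

theorem pathCylinder_Iic_inter_Icc {n m : ℕ} (hnm : n ≤ m) {σ τ : ℕ → Q}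
    (hστ : σ n = τ n) :
    pathCylinder (Finset.Iic n) σ ∩ pathCylinder (Finset.Icc n m) τ =
      pathCylinder (Finset.Iic m) (fun k => if k ≤ n then σ k else τ k) := by
  ext r
  simp only [Set.mem_inter_iff, pathCylinder, Set.mem_ofPred_eq, Finset.mem_Iic,
    Finset.mem_Icc]
  constructor
  · rintro ⟨hrσ, hrτ⟩ k hk
    split_ifs with hkn
    · exact hrσ k hkn
    · exact hrτ k ⟨by omega, hk⟩
  · intro hr
    refine ⟨fun k hk => by simpa [hk] using hr k (hk.trans hnm), fun k hk => ?_⟩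
    rcases hk.1.eq_or_lt with rfl | hlt
    · simpa [hστ] using hr _ hk.2
    · simpa [hlt.not_ge] using hr _ hk.2

theorem isPiSystem_range_pathCylinder (n : ℕ) :
    IsPiSystem (Set.range (pathCylinder (Q := Q) (Finset.Iic n))) := by
  rintro _ ⟨σ, rfl⟩ _ ⟨σ', rfl⟩ h
  rw [pathCylinder_inter_of_subset subset_rfl h]
  exact ⟨σ', rfl⟩

theorem isPiSystem_pathCylinder_Icc (n : ℕ) :
    IsPiSystem
      {s : Set (ℕ → Q) | ∃ m, n ≤ m ∧ ∃ τ, s = pathCylinder (Finset.Icc n m) τ} := by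
  rintro _ ⟨m, hm, τ, rfl⟩ _ ⟨m', hm', τ', rfl⟩ h
  rcases le_total m m' with hle | hle
  · rw [pathCylinder_inter_of_subset (Finset.Icc_subset_Icc_right hle) h]
    exact ⟨m', hm', τ', rfl⟩
  · rw [Set.inter_comm] at h ⊢
    rw [pathCylinder_inter_of_subset (Finset.Icc_subset_Icc_right hle) h]
    exact ⟨m, hm, τ, rfl⟩

variable [MeasurableSpace Q]

theorem futureField_le_pi (n : ℕ) : futureField Q n ≤ MeasurableSpace.pi :=
  iSup₂_le fun k _ => (measurable_pi_apply k).comap_le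

theorem piLE_le_generateFrom_pathCylinder [Finite Q] (n : ℕ) :
    (Filtration.piLE n : MeasurableSpace (ℕ → Q)) ≤
      MeasurableSpace.generateFrom (Set.range (pathCylinder (Finset.Iic n))) := by
  rw [Filtration.piLE_eq_comap_frestrictLe]
  rintro _ ⟨S, -, rfl⟩
  refine measurableSet_generateFrom_preimage (fun σ => ?_) S
  exact ⟨σ, (restrict_preimage_singleton _ σ).symm⟩

theorem futureField_le_generateFrom_pathCylinder [Finite Q] (n : ℕ) :
    futureField Q n ≤ MeasurableSpace.generateFrom
      {s | ∃ m, n ≤ m ∧ ∃ τ, s = pathCylinder (Finset.Icc n m) τ} := by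
  refine iSup₂_le fun k hk => ?_
  rintro _ ⟨s, -, rfl⟩
  refine measurableSet_generateFrom_preimage
    (f := Finset.restrict (π := fun _ => Q) (Finset.Icc n k)) (fun τ => ?_)
    {x | x ⟨k, Finset.mem_Icc.2 ⟨hk, le_rfl⟩⟩ ∈ s}
  exact ⟨k, hk, τ, (restrict_preimage_singleton _ τ)⟩

theorem measurableSet_pathCylinder [MeasurableSingletonClass Q] (s : Finset ℕ) (σ : ℕ → Q) :
    MeasurableSet (pathCylinder s σ) := by
  rw [← restrict_preimage_singleton]
  exact s.measurable_restrict (measurableSet_singleton _)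

end PathCylinder

section Markov

variable {Q A : Type*} [Fintype Q] {T : FPT Q A} {w : ℕ → A}

def pathWeight (T : FPT Q A) (w : ℕ → A) (s : Finset ℕ) (ρ : ℕ → Q) : ℝ :=
  ∏ k ∈ s, T.M (w k) (ρ k) (ρ (k + 1))

theorem pathWeight_nonneg (s : Finset ℕ) (ρ : ℕ → Q) : 0 ≤ pathWeight T w s ρ :=
  Finset.prod_nonneg fun _ _ => T.M_nonneg _ _ _

variable [MeasurableSpace Q] {μ : Measure (ℕ → Q)}

theorem IsMarkovMeasure.measure_pathCylinder (hμ : IsMarkovMeasure T T.init w μ) (m : ℕ)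
    (ρ : ℕ → Q) :
    μ (pathCylinder (Finset.Iic m) ρ) =
      ENNReal.ofReal (T.init (ρ 0) * pathWeight T w (Finset.range m) ρ) := by
  have hset : pathCylinder (Finset.Iic m) ρ = {r | ∀ i : Fin (m + 1), r i = ρ i} := by
    ext r
    simp [pathCylinder, Fin.forall_iff]
  rw [hset, hμ.2 m (fun i => ρ i), cylProb, pathWeight, ← Fin.prod_univ_eq_prod_range]
  simp

theorem IsMarkovMeasure.measure_pathCylinder_inter (hμ : IsMarkovMeasure T T.init w μ)
    {n m : ℕ} (hnm : n ≤ m) (σ τ : ℕ → Q) :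
    μ (pathCylinder (Finset.Iic n) σ ∩ pathCylinder (Finset.Icc n m) τ) =
      μ (pathCylinder (Finset.Iic n) σ ∩ {r | r n = τ n}) *
        ENNReal.ofReal (pathWeight T w (Finset.Ico n m) τ) := by
  have hFE : pathCylinder (Finset.Icc n m) τ ⊆ {r | r n = τ n} :=
    fun r hr => hr n (Finset.left_mem_Icc.2 hnm)
  obtain hστ | hστ := ne_or_eq (σ n) (τ n)
  · have hempty : pathCylinder (Finset.Iic n) σ ∩ {r | r n = τ n} = ∅ :=
      Set.eq_empty_of_forall_notMem fun r ⟨hrσ, hrτ⟩ =>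
        hστ ((hrσ n (Finset.mem_Iic.2 le_rfl)).symm.trans hrτ)
    rw [hempty, measure_empty, zero_mul]
    exact measure_mono_null (Set.inter_subset_inter_right _ hFE) (by rw [hempty, measure_empty])
  have hCE : pathCylinder (Finset.Iic n) σ ⊆ {r | r n = τ n} :=
    fun r hr => (hr n (Finset.mem_Iic.2 le_rfl)).trans hστ
  set ρ : ℕ → Q := fun k => if k ≤ n then σ k else τ k
  have hweight : pathWeight T w (Finset.range m) ρ =
      pathWeight T w (Finset.range n) σ * pathWeight T w (Finset.Ico n m) τ := by
    rw [pathWeight, ← Finset.prod_range_mul_prod_Ico _ hnm]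
    congr 1
    · refine Finset.prod_congr rfl fun k hk => ?_
      have hk := Finset.mem_range.1 hk
      simp [ρ, hk.le, Nat.succ_le_of_lt hk]
    · refine Finset.prod_congr rfl fun k hk => ?_
      obtain ⟨hnk, -⟩ := Finset.mem_Ico.1 hk
      rcases hnk.eq_or_lt with rfl | hlt
      · simp [ρ, hστ]
      · simp [ρ, hlt.not_ge, (hlt.trans (Nat.lt_succ_self k)).not_ge]
  rw [Set.inter_eq_left.2 hCE, pathCylinder_Iic_inter_Icc hnm hστ, hμ.measure_pathCylinder,
    hμ.measure_pathCylinder, hweight, ← mul_assoc,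
    ENNReal.ofReal_mul (mul_nonneg (T.init_nonneg _) (pathWeight_nonneg _ _))]
  simp

variable [MeasurableSingletonClass Q]

theorem IsMarkovMeasure.measure_pathCylinder_Icc
    (hμ : IsMarkovMeasure T T.init w μ) {n m : ℕ} (hnm : n ≤ m) (τ : ℕ → Q) :
    μ (pathCylinder (Finset.Icc n m) τ) =
      μ {r | r n = τ n} * ENNReal.ofReal (pathWeight T w (Finset.Ico n m) τ) := by
  have hX : Measurable (Preorder.frestrictLe (π := fun _ => Q) n) :=
    (Finset.Iic n).measurable_restrict
  rw [measure_eq_sum_measure_fiber_inter hX,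
    measure_eq_sum_measure_fiber_inter hX _ {r | r n = τ n}, Finset.sum_mul]
  refine Finset.sum_congr rfl fun x _ => ?_
  rcases (Preorder.frestrictLe (π := fun _ => Q) n ⁻¹' {x}).eq_empty_or_nonempty
    with h | ⟨σ, rfl⟩
  · simp [h]
  · rw [Preorder.frestrictLe, restrict_preimage_singleton]
    exact hμ.measure_pathCylinder_inter hnm σ τ

theorem IsMarkovMeasure.indep_piLE_futureField (hμ : IsMarkovMeasure T T.init w μ) (n : ℕ)
    (q : Q) :
    Indep (Filtration.piLE n) (futureField Q n) μ[|{r | r n = q}] := by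
  have := hμ.1
  have hE : MeasurableSet ((fun r : ℕ → Q => r n) ⁻¹' {q}) :=
    measurable_pi_apply n (measurableSet_singleton q)
  refine indep_of_indep_of_le_right (indep_of_indep_of_le_left (IndepSets.indep'
    (by rintro _ ⟨σ, rfl⟩; exact measurableSet_pathCylinder _ σ)
    (by rintro _ ⟨m, -, τ, rfl⟩; exact measurableSet_pathCylinder _ τ)
    (isPiSystem_range_pathCylinder n) (isPiSystem_pathCylinder_Icc n) ?_)
    (piLE_le_generateFrom_pathCylinder n)) (futureField_le_generateFrom_pathCylinder n)
  rw [IndepSets_iff]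
  rintro _ _ ⟨σ, rfl⟩ ⟨m, hnm, τ, rfl⟩
  refine cond_inter_eq_mul_of_measure_inter_mul (μ := μ) hE ?_
  have hFE : pathCylinder (Finset.Icc n m) τ ⊆ {r | r n = τ n} :=
    fun r hr => hr n (Finset.left_mem_Icc.2 hnm)
  by_cases hq : τ n = q
  · subst hq
    rw [Set.inter_eq_right.2 hFE, Set.inter_eq_right.2 (Set.inter_subset_right.trans hFE),
      hμ.measure_pathCylinder_inter hnm, hμ.measure_pathCylinder_Icc hnm, Set.inter_comm]
    ring
  · have hempty : {r : ℕ → Q | r n = q} ∩ pathCylinder (Finset.Icc n m) τ = ∅ :=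
      Set.eq_empty_of_forall_notMem fun r ⟨hrq, hrτ⟩ => hq ((hFE hrτ).symm.trans hrq)
    rw [hempty, ← Set.inter_assoc, Set.inter_right_comm, hempty]
    simp

end Markov

theorem stmt1_general {Q A : Type*} [Fintype Q]
    [MeasurableSpace Q] [MeasurableSingletonClass Q]
    (T : FPT Q A) (w : ℕ → A) (μ : Measure (ℕ → Q))
    (hμ : IsMarkovMeasure T T.init w μ)
    (Γ : Set (ℕ → Q)) (hΓ : MeasurableSet[tailField Q] Γ) :
    ∃ L : ℕ → Set Q,
      Tendsto (fun n => μ (symmDiff {r : ℕ → Q | r n ∈ L n} Γ)) atTop (𝓝 0) := by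
  have := hμ.1
  have hΓfut : ∀ n, MeasurableSet[futureField Q n] Γ :=
    fun n => iInf_le (futureField Q) n Γ hΓ
  have hΓm : MeasurableSet Γ := futureField_le_pi 0 Γ (hΓfut 0)
  refine ⟨fun n => majoritySet μ (fun r => r n) Γ,
    ENNReal.tendsto_atTop_zero.2 fun ε hε => ?_⟩
  obtain ⟨N, B, hB, hBΓ⟩ := exists_measurableSet_piLE_measure_symmDiff_lt μ hΓm hε
  refine ⟨N, fun n hn => le_trans ?_ hBΓ.le⟩
  exact measure_symmDiff_preimage_majoritySet_le (measurable_pi_apply n)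
    (Filtration.piLE.le N B hB) hΓm fun q =>
      (hμ.indep_piLE_futureField n q).indepSet_of_measurableSet (Filtration.piLE.mono hn B hB)
        (hΓfut n)

theorem stmt1 {Q A : Type*} [Fintype Q] [DecidableEq Q]
    [MeasurableSpace Q] [MeasurableSingletonClass Q]
    (T : FPT Q A) (w : ℕ → A) (μ : Measure (ℕ → Q))
    (hμ : IsMarkovMeasure T T.init w μ)
    (Γ : Set (ℕ → Q)) (hΓ : MeasurableSet[tailField Q] Γ) :
    ∃ L : ℕ → Set Q,
      Tendsto (fun n => μ (symmDiff {r : ℕ → Q | r n ∈ L n} Γ)) atTop (𝓝 0) :=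
  stmt1_general T w μ hμ Γ hΓ

end PAut
end

section
/- Let A be a probabilistic automaton with finite state space Q and let ε = ε(A) be its smallest nonzero transition probability. Then for every state q ∈ Q, every finite word ρ ∈ CRec(q), and every state q' in the support of δ(q,ρ), one has δ(q,ρ)(q') ≥ ε^(2^(2·|Q|)). -/
open Filter Topology MeasureTheory

namespace PAut

/-!
Fix `s` in the support of `δ(q, ρ)` and let `f m` be the mass that `δ(q, ρ[..m])` puts on the
states from which the rest `ρ[m..]` of the word reaches `s` with positive probability, so that
`f 0 = 1` and `f |ρ| = δ(q, ρ)(s)`. Reading one more letter keeps at least `ε · f m`: every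
counted state has a transition of probability `≥ ε` into a state counted at the next step.
If the pair (support, co-reachable set) at time `j` is the one at time `i < j`, chain recurrence
makes every state of the support recurrent for the chain read between `i` and `j`; then the
co-reachable set, being closed under predecessors, is closed under successors as well, and
`f i ≤ f j`. So the factor `ε` is paid at most once per pair, and there are `2 ^ (2 |Q|)` pairs.
-/

theorem pow_card_mul_le_of_step_of_revisit {κ : Type*} [Fintype κ] {f : ℕ → ℝ} {ε : ℝ}
    (key : ℕ → κ) {n : ℕ} (hε₀ : 0 ≤ ε) (hε₁ : ε ≤ 1) (hf₀ : 0 ≤ f 0)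
    (hstep : ∀ m < n, ε * f m ≤ f (m + 1))
    (hrevisit : ∀ i j, i < j → j ≤ n → key i = key j → f i ≤ f j) :
    ε ^ Fintype.card κ * f 0 ≤ f n := by
  classical
  set keysUpTo : ℕ → Finset κ := fun j => (Finset.range (j + 1)).image key
  have hclaim : ∀ j ≤ n, ε ^ (keysUpTo j).card * f 0 ≤ f j := by
    intro j
    induction j using Nat.strong_induction_on with
    | _ j ih =>
      intro hjn
      rcases j with _ | k
      · simpa [keysUpTo] using mul_le_of_le_one_left hf₀ hε₁
      by_cases hold : ∃ i ≤ k, key i = key (k + 1)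
      · obtain ⟨i, hik, hi⟩ := hold
        have hsub : keysUpTo i ⊆ keysUpTo (k + 1) :=
          Finset.image_subset_image (Finset.range_subset_range.mpr (by omega))
        calc ε ^ (keysUpTo (k + 1)).card * f 0
            ≤ ε ^ (keysUpTo i).card * f 0 := by
              gcongr ?_ * _
              exact pow_le_pow_of_le_one hε₀ hε₁ (Finset.card_le_card hsub)
          _ ≤ f i := ih i (by omega) (by omega)
          _ ≤ f (k + 1) := hrevisit i (k + 1) (by omega) hjn hi
      · have hnew : key (k + 1) ∉ keysUpTo k := by
          simp only [keysUpTo, Finset.mem_image, Finset.mem_range]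
          rintro ⟨i, hi, hik⟩
          exact hold ⟨i, by omega, hik⟩
        have hcard : (keysUpTo (k + 1)).card = (keysUpTo k).card + 1 := by
          simp only [keysUpTo, Finset.range_add_one (n := k + 1), Finset.image_insert]
          exact Finset.card_insert_of_notMem hnew
        calc ε ^ (keysUpTo (k + 1)).card * f 0
            = ε * (ε ^ (keysUpTo k).card * f 0) := by rw [hcard, pow_succ]; ring
          _ ≤ ε * f k := by gcongr; exact ih k (by omega) (by omega)
          _ ≤ f (k + 1) := hstep k (by omega)
  calc ε ^ Fintype.card κ * f 0
      ≤ ε ^ (keysUpTo n).card * f 0 := by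
        gcongr ?_ * _
        exact pow_le_pow_of_le_one hε₀ hε₁ (Finset.card_le_univ _)
    _ ≤ f n := hclaim n le_rfl

theorem mul_pos_iff_of_nonneg {a b : ℝ} (ha : 0 ≤ a) (hb : 0 ≤ b) :
    0 < a * b ↔ 0 < a ∧ 0 < b := by
  simp only [ha.lt_iff_ne', hb.lt_iff_ne', (mul_nonneg ha hb).lt_iff_ne', ne_eq, mul_eq_zero,
    not_or]

theorem mem_supp_iff_pos {Q : Type*} {β : Q → ℝ} (hβ : ∀ x, 0 ≤ β x) {x : Q} :
    x ∈ supp β ↔ 0 < β x :=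
  (hβ x).lt_iff_ne'.symm

theorem dirac_nonneg {Q : Type*} [DecidableEq Q] (q x : Q) : 0 ≤ dirac q x := by
  unfold dirac
  split_ifs <;> norm_num

section MassOn

variable {Q : Type*} [Fintype Q]

theorem massOn_nonneg {β : Q → ℝ} (hβ : ∀ x, 0 ≤ β x) (F : Set Q) : 0 ≤ massOn β F :=
  Finset.sum_nonneg fun x _ => by split_ifs <;> simp [hβ x]

theorem le_massOn {β : Q → ℝ} (hβ : ∀ x, 0 ≤ β x) {F : Set Q} {x : Q} (hx : x ∈ F) :
    β x ≤ massOn β F := by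
  classical
  calc β x = if x ∈ F then β x else 0 := by rw [if_pos hx]
    _ ≤ massOn β F := by
      unfold massOn
      convert Finset.single_le_sum (f := fun y => if y ∈ F then β y else 0)
        (fun y _ => by split_ifs <;> simp [hβ y]) (Finset.mem_univ x)

theorem massOn_eq_sum_of_forall_ne_zero_mem {β : Q → ℝ} {F : Set Q}
    (h : ∀ x, β x ≠ 0 → x ∈ F) : massOn β F = ∑ x, β x :=
  Finset.sum_congr rfl fun x _ => by
    split_ifs with hx
    · rfl
    · by_contra hne
      exact hx (h x (Ne.symm hne))

theorem massOn_singleton (β : Q → ℝ) (x : Q) : massOn β {x} = β x := by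
  rw [massOn, Finset.sum_eq_single x (fun y _ hy => if_neg (mt Set.mem_singleton_iff.mp hy))
    (absurd (Finset.mem_univ x)), if_pos (Set.mem_singleton x)]

theorem massOn_dirac_of_mem [DecidableEq Q] {q : Q} {F : Set Q} (hq : q ∈ F) :
    massOn (dirac q) F = 1 := by
  rw [massOn, Finset.sum_eq_single q (fun y _ hy => by simp [dirac, hy])
    (absurd (Finset.mem_univ q)), if_pos hq, dirac, if_pos rfl]

end MassOn

section MinProb

variable {Q A : Type*} [Fintype Q] (T : FPT Q A)

theorem minProb_nonneg : 0 ≤ minProb T :=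
  Real.sInf_nonneg fun _ hx => hx.1.le

theorem minProb_le {a : A} {x y : Q} (h : 0 < T.M a x y) : minProb T ≤ T.M a x y :=
  csInf_le ⟨0, fun _ hz => hz.1.le⟩ ⟨h, a, x, y, rfl⟩

theorem minProb_le_one : minProb T ≤ 1 := by
  rcases Set.eq_empty_or_nonempty {x : ℝ | 0 < x ∧ ∃ a q q', T.M a q q' = x} with
    h | ⟨_, hx, a, x, y, rfl⟩
  · rw [minProb, h, Real.sInf_empty]
    exact zero_le_one
  · calc minProb T ≤ T.M a x y := minProb_le T hx
      _ ≤ ∑ z, T.M a x z :=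
          Finset.single_le_sum (fun z _ => T.M_nonneg a x z) (Finset.mem_univ y)
      _ = 1 := T.M_row a x

end MinProb

section Words

variable {Q A : Type*} [Fintype Q] [DecidableEq Q] (T : FPT Q A)

theorem Mword_nonneg (l : List A) (x y : Q) : 0 ≤ Mword T l x y := by
  induction l generalizing x with
  | nil => unfold Mword; split_ifs <;> norm_num
  | cons a l ih => exact Finset.sum_nonneg fun z _ => mul_nonneg (T.M_nonneg a x z) (ih z)

theorem sum_Mword (l : List A) (x : Q) : ∑ y, Mword T l x y = 1 := by
  induction l generalizing x with
  | nil => simp [Mword]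
  | cons a l ih =>
    simp only [Mword]
    rw [Finset.sum_comm]
    simp [← Finset.mul_sum, ih, T.M_row]

theorem Mword_singleton (a : A) (x y : Q) : Mword T [a] x y = T.M a x y := by
  simp [Mword]

theorem Mword_append (l₁ l₂ : List A) (x y : Q) :
    Mword T (l₁ ++ l₂) x y = ∑ z, Mword T l₁ x z * Mword T l₂ z y := by
  induction l₁ generalizing x with
  | nil => simp [Mword]
  | cons a l ih =>
    simp only [List.cons_append, Mword, ih, Finset.mul_sum, Finset.sum_mul, mul_assoc]
    exact Finset.sum_comm

theorem Mword_append_pos_iff (l₁ l₂ : List A) (x y : Q) :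
    0 < Mword T (l₁ ++ l₂) x y ↔ ∃ z, 0 < Mword T l₁ x z ∧ 0 < Mword T l₂ z y := by
  rw [Mword_append, Finset.sum_pos_iff_of_nonneg
    fun z _ => mul_nonneg (Mword_nonneg T l₁ x z) (Mword_nonneg T l₂ z y)]
  simp only [Finset.mem_univ, true_and]
  exact exists_congr fun z =>
    mul_pos_iff_of_nonneg (Mword_nonneg T l₁ x z) (Mword_nonneg T l₂ z y)

theorem delta_nil (β : Q → ℝ) : delta T β [] = β := by
  funext x
  simp [delta, Mword]

theorem delta_append (β : Q → ℝ) (l₁ l₂ : List A) :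
    delta T β (l₁ ++ l₂) = delta T (delta T β l₁) l₂ := by
  funext x
  simp only [delta, Mword_append, Finset.mul_sum, Finset.sum_mul, mul_assoc]
  exact Finset.sum_comm

theorem delta_nonneg {β : Q → ℝ} (hβ : ∀ x, 0 ≤ β x) (l : List A) (x : Q) :
    0 ≤ delta T β l x :=
  Finset.sum_nonneg fun t _ => mul_nonneg (hβ t) (Mword_nonneg T l t x)

theorem delta_dirac (q : Q) (l : List A) (x : Q) : delta T (dirac q) l x = Mword T l q x := by
  simp [delta, dirac]

theorem supp_delta {β : Q → ℝ} (hβ : ∀ x, 0 ≤ β x) (l : List A) :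
    supp (delta T β l) = act T (supp β) l := by
  ext x
  rw [mem_supp_iff_pos (delta_nonneg T hβ l), delta,
    Finset.sum_pos_iff_of_nonneg fun t _ => mul_nonneg (hβ t) (Mword_nonneg T l t x)]
  simp only [act, Set.mem_ofPred_eq, mem_supp_iff_pos hβ, Finset.mem_univ, true_and,
    mul_pos_iff_of_nonneg (hβ _) (Mword_nonneg T l _ x)]

theorem massOn_delta (β : Q → ℝ) (l : List A) (G : Set Q) :
    massOn (delta T β l) G = ∑ t, β t * massOn (Mword T l t) G := by
  simp only [massOn, delta, Finset.mul_sum]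
  rw [Finset.sum_comm]
  refine Finset.sum_congr rfl fun u _ => ?_
  split_ifs <;> simp

theorem mul_massOn_le_massOn_delta {β : Q → ℝ} (hβ : ∀ x, 0 ≤ β x) {F G : Set Q} {c : ℝ}
    {l : List A} (h : ∀ t ∈ F, 0 < β t → c ≤ massOn (Mword T l t) G) :
    c * massOn β F ≤ massOn (delta T β l) G := by
  rw [massOn_delta, massOn, Finset.mul_sum]
  refine Finset.sum_le_sum fun t _ => ?_
  have hrow := massOn_nonneg (Mword_nonneg T l t) G
  split_ifs with ht
  · rcases (hβ t).eq_or_lt with h0 | hpos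
    · simp [← h0]
    · rw [mul_comm]
      exact mul_le_mul_of_nonneg_left (h t ht hpos) (hβ t)
  · simpa using mul_nonneg (hβ t) hrow

end Words

section Coreach

variable {Q A : Type*} [Fintype Q] [DecidableEq Q] (T : FPT Q A)

def coreach (l : List A) (s : Q) : Set Q := {t | 0 < Mword T l t s}

theorem coreach_nil (s : Q) : coreach T [] s = {s} := by
  ext t
  by_cases h : t = s <;> simp [coreach, Mword, h]

theorem mem_coreach_append {l₁ l₂ : List A} {s t : Q} :
    t ∈ coreach T (l₁ ++ l₂) s ↔ ∃ v ∈ coreach T l₂ s, 0 < Mword T l₁ t v := by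
  simp only [coreach, Set.mem_ofPred_eq, Mword_append_pos_iff]
  exact exists_congr fun v => and_comm

theorem minProb_mul_massOn_coreach_le {β : Q → ℝ} (hβ : ∀ x, 0 ≤ β x) (a : A) (l : List A)
    (s : Q) :
    minProb T * massOn β (coreach T (a :: l) s) ≤ massOn (delta T β [a]) (coreach T l s) := by
  refine mul_massOn_le_massOn_delta T hβ fun t ht _ => ?_
  obtain ⟨v, hv, hav⟩ := (mem_coreach_append T (l₁ := [a])).mp ht
  rw [Mword_singleton] at hav
  calc minProb T ≤ T.M a t v := minProb_le T hav
    _ = Mword T [a] t v := (Mword_singleton T a t v).symm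
    _ ≤ massOn (Mword T [a] t) (coreach T l s) := le_massOn (Mword_nonneg T [a] t) hv

theorem mem_of_reflTransGen_stepRel {S C : Set Q} {l : List A}
    (hC : ∀ t u, 0 < Mword T l t u → u ∈ C → t ∈ C) {t u : Q}
    (htu : Relation.ReflTransGen (stepRel T S l) t u) (hu : u ∈ C) : t ∈ C := by
  induction htu using Relation.ReflTransGen.head_induction_on with
  | refl => exact hu
  | head hstep _ ih => exact hC _ _ hstep.2.2 ih

/-- A set closed under `l`-predecessors is, by recurrence, closed under `l`-successors from the
support, so no mass leaves it. -/
theorem massOn_le_massOn_delta_of_recurrent {β : Q → ℝ} (hβ : ∀ x, 0 ≤ β x) {l : List A}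
    {C : Set Q} (hact : act T (supp β) l = supp β) (hrec : hashSet T (supp β) l = supp β)
    (hC : ∀ t u, 0 < Mword T l t u → u ∈ C → t ∈ C) :
    massOn β C ≤ massOn (delta T β l) C := by
  rw [← one_mul (massOn β C)]
  refine mul_massOn_le_massOn_delta T hβ fun t ht hβt => ?_
  have htS : t ∈ supp β := (mem_supp_iff_pos hβ).mpr hβt
  have hsucc : ∀ u, Mword T l t u ≠ 0 → u ∈ C := fun u hu => by
    have hpos := (Mword_nonneg T l t u).lt_of_ne' hu
    have huS : u ∈ supp β := hact ▸ ⟨t, htS, hpos⟩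
    have htrec : t ∈ hashSet T (supp β) l := hrec.symm ▸ htS
    exact mem_of_reflTransGen_stepRel T hC (htrec.2 u (.single ⟨htS, huS, hpos⟩)) ht
  rw [massOn_eq_sum_of_forall_ne_zero_mem hsucc, sum_Mword]

noncomputable def coreachMass (β : Q → ℝ) (ρ : List A) (s : Q) (m : ℕ) : ℝ :=
  massOn (delta T β (ρ.take m)) (coreach T (ρ.drop m) s)

theorem minProb_mul_coreachMass_le {β : Q → ℝ} (hβ : ∀ x, 0 ≤ β x) {ρ : List A} (s : Q)
    {m : ℕ} (hm : m < ρ.length) :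
    minProb T * coreachMass T β ρ s m ≤ coreachMass T β ρ s (m + 1) := by
  rw [coreachMass, coreachMass, List.take_succ_eq_append_getElem hm, delta_append,
    List.drop_eq_getElem_cons hm]
  exact minProb_mul_massOn_coreach_le T (delta_nonneg T hβ _) _ _ s

theorem coreachMass_le_of_eq {β : Q → ℝ} (hβ : ∀ x, 0 ≤ β x) {ρ : List A} (s : Q)
    (hcr : ChainRecFin T β ρ) {i j : ℕ} (hij : i ≤ j)
    (hS : supp (delta T β (ρ.take i)) = supp (delta T β (ρ.take j)))
    (hC : coreach T (ρ.drop i) s = coreach T (ρ.drop j) s) :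
    coreachMass T β ρ s i ≤ coreachMass T β ρ s j := by
  set seg := (ρ.drop i).take (j - i)
  have htake : ρ.take i ++ seg = ρ.take j := by
    rw [← List.take_add, Nat.add_sub_cancel' hij]
  have hdrop : seg ++ ρ.drop j = ρ.drop i := by
    rw [← List.take_append_drop (j - i) (ρ.drop i), List.drop_drop, Nat.add_sub_cancel' hij]
  have hact : act T (supp (delta T β (ρ.take i))) seg = supp (delta T β (ρ.take i)) := by
    rw [← supp_delta T (delta_nonneg T hβ _), ← delta_append, htake, hS]
  have hrec : hashSet T (supp (delta T β (ρ.take i))) seg = supp (delta T β (ρ.take i)) := by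
    by_contra hne
    exact hcr _ seg (htake ▸ List.take_prefix j ρ) ⟨hact, hne⟩
  rw [coreachMass, coreachMass, hC, ← htake, delta_append]
  refine massOn_le_massOn_delta_of_recurrent T (delta_nonneg T hβ _) hact hrec
    fun t u htu hu => ?_
  rw [← hC, ← hdrop]
  exact (mem_coreach_append T).mpr ⟨u, hu, htu⟩

end Coreach

theorem stmt5 {Q A : Type*} [Fintype Q] [DecidableEq Q]
    (T : FPT Q A) (q : Q) (ρ : List A)
    (h : ChainRecFin T (dirac q) ρ)
    (q' : Q) (hq' : q' ∈ supp (delta T (dirac q) ρ)) :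
    minProb T ^ (2 ^ (2 * Fintype.card Q)) ≤ delta T (dirac q) ρ q' := by
  have hq'pos : 0 < Mword T ρ q q' := by
    rwa [mem_supp_iff_pos (delta_nonneg T (dirac_nonneg q) ρ), delta_dirac] at hq'
  have hstart : coreachMass T (dirac q) ρ q' 0 = 1 := by
    rw [coreachMass, List.take_zero, List.drop_zero, delta_nil]
    exact massOn_dirac_of_mem hq'pos
  have hend : coreachMass T (dirac q) ρ q' ρ.length = delta T (dirac q) ρ q' := by
    rw [coreachMass, List.take_length, List.drop_length, coreach_nil, massOn_singleton]
  have hcard : Fintype.card (Set Q × Set Q) = 2 ^ (2 * Fintype.card Q) := by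
    rw [Fintype.card_prod, Fintype.card_set, ← pow_add, two_mul]
  rw [← hcard, ← hend, ← mul_one (_ ^ _), ← hstart]
  exact pow_card_mul_le_of_step_of_revisit
    (fun m => (supp (delta T (dirac q) (ρ.take m)), coreach T (ρ.drop m) q'))
    (minProb_nonneg T) (minProb_le_one T) (hstart ▸ zero_le_one)
    (fun m hm => minProb_mul_coreachMass_le T (dirac_nonneg q) q' hm)
    (fun i j hij _ hkey => coreachMass_le_of_eq T (dirac_nonneg q) q' h hij.le
      (congrArg Prod.fst hkey) (congrArg Prod.snd hkey))

end PAut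
end
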